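/- The theory T_2n has no additive pre-witness: there is no function wit from quantifier-free Σ_P-formulas to quantifier-free Σ_P-formulas that is simultaneously a pre-witness for T_2n and additive for T_2n. (In particular, T_2n is not additively polite; the computability requirement on the witness is not needed for this impossibility.) -/

import Mathlib

open FirstOrder FirstOrder.Language

/-- The signature Σ_P with a single unary predicate symbol `P`. -/
def LP : FirstOrder.Language :=
  ⟨fun _ => Empty, fun n => match n with | 1 => Unit | _ => Empty⟩

/-- The unary predicate symbol of `LP`. -/
def PSymb : LP.Relations 1 := Unit.unit

/-- The interpretation of the predicate symbol `P` in an `LP`-structure. -/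
def PPred (M : Type) (inst : LP.Structure M) (a : M) : Prop :=
  inst.RelMap PSymb ![a]

/-- Realization of a formula, with the structure instance given explicitly. -/
def RealizeP {α : Type} (M : Type) (inst : LP.Structure M) (φ : LP.Formula α) (v : α → M) : Prop :=
  letI := inst
  φ.Realize v

/-- `M` is a model of T_2n, axiomatized by `{ψ_n^P → ψ_{≥2n} : n ≥ 1}`: if there are at
least `n` distinct elements satisfying `P`, then there are at least `2n` elements. -/
def ModelT2n (M : Type) (inst : LP.Structure M) : Prop :=
  ∀ n : ℕ, 1 ≤ n →
    (∃ x : Fin n → M, Function.Injective x ∧ ∀ i, PPred M inst (x i)) →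
    ∃ y : Fin (2 * n) → M, Function.Injective y

/-- `φ` is a conjunction of flat literals all of whose terms are variables:
literals of the form `P(v)`, `¬P(v)`, `v = w`, or `v ≠ w`. -/
inductive IsFlatConjP : LP.Formula ℕ → Prop
  | pos (v : ℕ) : IsFlatConjP (Relations.formula₁ PSymb (Term.var v))
  | neg (v : ℕ) : IsFlatConjP (Relations.formula₁ PSymb (Term.var v)).not
  | varEq (v w : ℕ) : IsFlatConjP (Term.equal (Term.var v) (Term.var w))
  | varNe (v w : ℕ) : IsFlatConjP (Term.equal (Term.var v) (Term.var w)).not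
  | conj (φ ψ : LP.Formula ℕ) : IsFlatConjP φ → IsFlatConjP ψ → IsFlatConjP (φ ⊓ ψ)

/-- `wit` is a pre-witness for T_2n: it maps quantifier-free formulas to quantifier-free
formulas; `φ` and `∃x⃗. wit(φ)` (where `x⃗ = vars(wit(φ)) \ vars(φ)`) hold in exactly the
same models-with-valuations of T_2n; and if `wit(φ)` is satisfiable in a model of T_2n,
then `φ` is satisfied in some model of T_2n under a valuation in which every element of
the domain is the value of some variable of `wit(φ)`. -/
def IsPreWitness (wit : LP.Formula ℕ → LP.Formula ℕ) : Prop :=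
  (∀ φ : LP.Formula ℕ, φ.IsQF → (wit φ).IsQF) ∧
  (∀ φ : LP.Formula ℕ, φ.IsQF →
    ∀ (M : Type) (inst : LP.Structure M), ModelT2n M inst → ∀ v : ℕ → M,
      (RealizeP M inst φ v ↔
        ∃ w : ℕ → M, (∀ x : ℕ, x ∉ (wit φ).freeVarFinset \ φ.freeVarFinset → w x = v x) ∧
          RealizeP M inst (wit φ) w)) ∧
  (∀ φ : LP.Formula ℕ, φ.IsQF →
    (∃ (M : Type) (inst : LP.Structure M), ModelT2n M inst ∧
      ∃ v : ℕ → M, RealizeP M inst (wit φ) v) →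
    ∃ (M : Type) (inst : LP.Structure M), ModelT2n M inst ∧
      ∃ v : ℕ → M, RealizeP M inst φ v ∧ ∀ a : M, ∃ x ∈ (wit φ).freeVarFinset, v x = a)

/-- `wit` is additive for T_2n: for quantifier-free `φ` and conjunctions `ψ` of flat
literals all of whose terms are variables, `wit(wit(φ) ∧ ψ)` and `wit(φ) ∧ ψ` hold in
exactly the same models-with-valuations of T_2n and have the same set of variables. -/
def IsAdditive (wit : LP.Formula ℕ → LP.Formula ℕ) : Prop :=
  ∀ φ ψ : LP.Formula ℕ, φ.IsQF → IsFlatConjP ψ →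
    (∀ (M : Type) (inst : LP.Structure M), ModelT2n M inst → ∀ v : ℕ → M,
      (RealizeP M inst (wit (wit φ ⊓ ψ)) v ↔ RealizeP M inst (wit φ ⊓ ψ) v)) ∧
    (wit (wit φ ⊓ ψ)).freeVarFinset = (wit φ ⊓ ψ).freeVarFinset

/-!
Take `φ = ⊤` and let `S` be the `s` variables of `wit ⊤`. On `s + 1` fresh variables, the flat
conjunction `ψ` saying that they are pairwise distinct and satisfy `P` is consistent with `wit ⊤`
(in `ℕ` with `P` everywhere true). By additivity `wit (wit ⊤ ∧ ψ)` is then satisfiable and has the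
same at most `2s + 1` variables as `wit ⊤ ∧ ψ`, so the pre-witness property yields a model of
`T_2n` with at most `2s + 1` elements in which `s + 1` distinct elements satisfy `P`; but such a
model has at least `2s + 2` elements.
-/

def predLit (x : ℕ) : LP.Formula ℕ := Relations.formula₁ PSymb (Term.var x)

def neLit (x y : ℕ) : LP.Formula ℕ := (Term.equal (Term.var x) (Term.var y)).not

noncomputable def distinctPLits (X : Finset ℕ) : List (LP.Formula ℕ) :=
  X.toList.map predLit ++ X.offDiag.toList.map fun p => neLit p.1 p.2

/-- The seed literal `P(x₀)` only makes the conjunction nonempty: no flat literal stands for `⊤`. -/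
noncomputable def distinctPConj (x₀ : ℕ) (X : Finset ℕ) : LP.Formula ℕ :=
  (distinctPLits X).foldl (· ⊓ ·) (predLit x₀)

theorem isFlatConjP_foldl_inf {φ : LP.Formula ℕ} {l : List (LP.Formula ℕ)} (hφ : IsFlatConjP φ)
    (hl : ∀ ψ ∈ l, IsFlatConjP ψ) : IsFlatConjP (l.foldl (· ⊓ ·) φ) := by
  induction l generalizing φ with
  | nil => exact hφ
  | cons ψ l ih =>
    simp only [List.mem_cons, forall_eq_or_imp] at hl
    exact ih (.conj _ _ hφ hl.1) hl.2

theorem IsFlatConjP.isQF {φ : LP.Formula ℕ} (h : IsFlatConjP φ) : φ.IsQF := by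
  induction h with
  | pos => exact (BoundedFormula.IsAtomic.rel _ _).isQF
  | neg => exact (BoundedFormula.IsAtomic.rel _ _).isQF.not
  | varEq => exact (BoundedFormula.IsAtomic.equal _ _).isQF
  | varNe => exact (BoundedFormula.IsAtomic.equal _ _).isQF.not
  | conj _ _ _ _ ih₁ ih₂ => exact ih₁.inf ih₂

theorem isFlatConjP_distinctPConj (x₀ : ℕ) (X : Finset ℕ) :
    IsFlatConjP (distinctPConj x₀ X) := by
  refine isFlatConjP_foldl_inf (.pos x₀) fun ψ hψ => ?_
  simp only [distinctPLits, List.mem_append, List.mem_map] at hψ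
  rcases hψ with ⟨x, -, rfl⟩ | ⟨p, -, rfl⟩
  exacts [.pos x, .varNe _ _]

theorem freeVarFinset_inf (φ ψ : LP.Formula ℕ) :
    (φ ⊓ ψ).freeVarFinset = φ.freeVarFinset ∪ ψ.freeVarFinset := by
  simp [Min.min, BoundedFormula.not]

theorem freeVarFinset_foldl_inf_subset {φ : LP.Formula ℕ} {l : List (LP.Formula ℕ)}
    {V : Finset ℕ} (hφ : φ.freeVarFinset ⊆ V) (hl : ∀ ψ ∈ l, ψ.freeVarFinset ⊆ V) :
    (l.foldl (· ⊓ ·) φ).freeVarFinset ⊆ V := by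
  induction l generalizing φ with
  | nil => exact hφ
  | cons ψ l ih =>
    simp only [List.mem_cons, forall_eq_or_imp] at hl
    exact ih (by rw [freeVarFinset_inf]; exact Finset.union_subset hφ hl.1) hl.2

theorem freeVarFinset_predLit (x : ℕ) : (predLit x).freeVarFinset = {x} := by
  simp [predLit, Relations.formula₁, Relations.formula, Relations.boundedFormula, Term.relabel,
    Term.varFinsetLeft]

theorem freeVarFinset_neLit (x y : ℕ) : (neLit x y).freeVarFinset = {x, y} := by
  simp [neLit, Term.equal, Term.bdEqual, BoundedFormula.not, Term.relabel, Term.varFinsetLeft]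

theorem freeVarFinset_distinctPConj_subset {x₀ : ℕ} {X : Finset ℕ} (hx₀ : x₀ ∈ X) :
    (distinctPConj x₀ X).freeVarFinset ⊆ X := by
  refine freeVarFinset_foldl_inf_subset (by simpa [freeVarFinset_predLit]) fun ψ hψ => ?_
  simp only [distinctPLits, List.mem_append, List.mem_map, Finset.mem_toList] at hψ
  rcases hψ with ⟨x, hx, rfl⟩ | ⟨p, hp, rfl⟩
  · simpa [freeVarFinset_predLit] using hx
  · obtain ⟨h₁, h₂, -⟩ := Finset.mem_offDiag.1 hp
    simp [freeVarFinset_neLit, Finset.insert_subset_iff, h₁, h₂]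

section Realize

variable {M : Type} (inst : LP.Structure M)

theorem realizeP_inf {φ ψ : LP.Formula ℕ} {v : ℕ → M} :
    RealizeP M inst (φ ⊓ ψ) v ↔ RealizeP M inst φ v ∧ RealizeP M inst ψ v :=
  Formula.realize_inf

theorem realizeP_foldl_inf {φ : LP.Formula ℕ} {l : List (LP.Formula ℕ)} {v : ℕ → M} :
    RealizeP M inst (l.foldl (· ⊓ ·) φ) v ↔
      RealizeP M inst φ v ∧ ∀ ψ ∈ l, RealizeP M inst ψ v := by
  induction l generalizing φ with
  | nil => simp
  | cons ψ l ih => simp [ih, realizeP_inf, and_assoc]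

theorem realizeP_predLit {x : ℕ} {v : ℕ → M} :
    RealizeP M inst (predLit x) v ↔ PPred M inst (v x) := by
  simp [RealizeP, predLit, PPred, Formula.realize_rel₁]

theorem realizeP_neLit {x y : ℕ} {v : ℕ → M} :
    RealizeP M inst (neLit x y) v ↔ v x ≠ v y := by
  simp [RealizeP, neLit]

theorem realizeP_distinctPConj {x₀ : ℕ} {X : Finset ℕ} {v : ℕ → M} :
    RealizeP M inst (distinctPConj x₀ X) v ↔
      PPred M inst (v x₀) ∧ (∀ x ∈ X, PPred M inst (v x)) ∧ Set.InjOn v X := by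
  simp only [distinctPConj, distinctPLits, realizeP_foldl_inf, List.forall_mem_append,
    List.forall_mem_map, realizeP_predLit, realizeP_neLit, Finset.mem_toList, Prod.forall,
    Finset.mem_offDiag, and_imp, Set.InjOn, Finset.mem_coe, Ne, not_imp_not]
  exact and_congr_right' <| and_congr_right'
    ⟨fun h a ha b hb => h a b ha hb, fun h a b ha hb => h ha hb⟩

end Realize

abbrev natAllP : LP.Structure ℕ := ⟨fun f => f.elim, fun _ _ => True⟩

theorem modelT2n_of_infinite (M : Type) [Infinite M] (inst : LP.Structure M) :
    ModelT2n M inst :=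
  fun _ _ _ => ⟨_, (Fin.valEmbedding.trans (Infinite.natEmbedding M)).injective⟩

theorem ModelT2n.two_mul_card_le {M : Type} {inst : LP.Structure M} (hM : ModelT2n M inst)
    {v : ℕ → M} {X Y : Finset ℕ} (hX : X.Nonempty) (hP : ∀ x ∈ X, PPred M inst (v x))
    (hinj : Set.InjOn v X) (hcov : ∀ a : M, ∃ y ∈ Y, v y = a) : 2 * X.card ≤ Y.card := by
  classical
  obtain ⟨z, hz⟩ := hM X.card hX.card_pos
    ⟨fun i => v (X.equivFin.symm i), fun i j h => X.equivFin.symm.injective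
      (Subtype.ext (hinj (X.equivFin.symm i).2 (X.equivFin.symm j).2 h)),
     fun i => hP _ (X.equivFin.symm i).2⟩
  calc 2 * X.card = (Finset.univ : Finset (Fin (2 * X.card))).card := by simp
    _ ≤ (Y.image v).card := Finset.card_le_card_of_injOn z
        (fun i _ => Finset.mem_image.2 (hcov (z i))) hz.injOn
    _ ≤ Y.card := Finset.card_image_le

theorem IsPreWitness.exists_covered_model {wit : LP.Formula ℕ → LP.Formula ℕ}
    (hwit : IsPreWitness wit) (hadd : IsAdditive wit) {φ ψ : LP.Formula ℕ} (hφ : φ.IsQF)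
    (hψ : IsFlatConjP ψ)
    (hsat : ∃ (M : Type) (inst : LP.Structure M), ModelT2n M inst ∧
      ∃ v : ℕ → M, RealizeP M inst (wit φ ⊓ ψ) v) :
    ∃ (M : Type) (inst : LP.Structure M), ModelT2n M inst ∧ ∃ v : ℕ → M,
      RealizeP M inst (wit φ ⊓ ψ) v ∧ ∀ a : M, ∃ x ∈ (wit φ ⊓ ψ).freeVarFinset, v x = a := by
  obtain ⟨hqf, -, hcover⟩ := hwit
  obtain ⟨hiff, hfv⟩ := hadd φ ψ hφ hψ
  obtain ⟨M, inst, hM, v, hv⟩ := hsat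
  obtain ⟨N, instN, hN, w, hw, hcov⟩ :=
    hcover _ ((hqf φ hφ).inf hψ.isQF) ⟨M, inst, hM, v, (hiff M inst hM v).2 hv⟩
  exact ⟨N, instN, hN, w, hw, hfv ▸ hcov⟩

theorem IsPreWitness.exists_realize_wit_top_inf_distinctPConj
    {wit : LP.Formula ℕ → LP.Formula ℕ} (hwit : IsPreWitness wit) {X : Finset ℕ}
    (hX : Disjoint (wit ⊤).freeVarFinset X) (x₀ : ℕ) :
    ∃ w : ℕ → ℕ, RealizeP ℕ natAllP (wit ⊤ ⊓ distinctPConj x₀ X) w := by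
  obtain ⟨-, hequiv, -⟩ := hwit
  obtain ⟨w, hw, hwit⟩ := (hequiv ⊤ .top ℕ natAllP (modelT2n_of_infinite ℕ natAllP) id).1
    (by simp [RealizeP])
  have hwX : ∀ x ∈ X, w x = x := fun x hx =>
    hw x (by simpa [Top.top, BoundedFormula.not] using Finset.disjoint_right.1 hX hx)
  refine ⟨w, (realizeP_inf _).2 ⟨hwit, (realizeP_distinctPConj _).2 ⟨trivial, fun _ _ => trivial,
    fun a ha b hb h => ?_⟩⟩⟩
  rwa [hwX a ha, hwX b hb] at h

/-- The theory T_2n has no additive pre-witness. -/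
theorem stmt_10 :
    ¬ ∃ wit : LP.Formula ℕ → LP.Formula ℕ, IsPreWitness wit ∧ IsAdditive wit := by
  rintro ⟨wit, hwit, hadd⟩
  set S := (wit ⊤).freeVarFinset
  obtain ⟨T, hST, hT⟩ := Infinite.exists_superset_card_eq S (S.card + (S.card + 1)) (by omega)
  set X := T \ S
  have hXcard : X.card = S.card + 1 := by rw [Finset.card_sdiff_of_subset hST]; omega
  obtain ⟨x₀, hx₀⟩ : X.Nonempty := Finset.card_pos.1 (by omega)
  obtain ⟨w, hw⟩ := hwit.exists_realize_wit_top_inf_distinctPConj Finset.disjoint_sdiff x₀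
  obtain ⟨M, inst, hM, v, hv, hcov⟩ := hwit.exists_covered_model hadd .top
    (isFlatConjP_distinctPConj x₀ X)
    ⟨ℕ, natAllP, modelT2n_of_infinite ℕ natAllP, w, hw⟩
  obtain ⟨-, -, hP, hinj⟩ := (realizeP_inf inst).1 hv |>.imp_right (realizeP_distinctPConj inst).1
  have hcard : (wit ⊤ ⊓ distinctPConj x₀ X).freeVarFinset.card ≤ S.card + X.card := by
    rw [freeVarFinset_inf]
    exact (Finset.card_union_le _ _).trans
      (Nat.add_le_add_left (Finset.card_le_card (freeVarFinset_distinctPConj_subset hx₀)) _)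
  have := hM.two_mul_card_le ⟨x₀, hx₀⟩ hP hinj hcov
  omega
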